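/- The N/2 two-sample shifts {ψ0[·−2l] : l = 0,…,N/2−1} of the first-level discrete-spline wavelet packet ψ0 of order 2r form an orthonormal system in Π[N]: for all l, p ∈ {0,…,N/2−1}, ⟨ψ0[·−2l], ψ0[·−2p]⟩ = δ[l−p]. -/

import Mathlib

open Finset

noncomputable def omegaN (N : ℕ) : ℂ := Complex.exp (2 * Real.pi * Complex.I / N)

noncomputable def U4r (N r : ℕ) (n : ℤ) : ℝ :=
  ((Real.cos (Real.pi * n / N)) ^ (4 * r) + (Real.sin (Real.pi * n / N)) ^ (4 * r)) / 2

noncomputable def betaF (N r : ℕ) (n : ℤ) : ℂ :=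
  Complex.ofReal ((Real.cos (Real.pi * n / N)) ^ (2 * r) / Real.sqrt (U4r N r n))

noncomputable def alphaF (N r : ℕ) (n : ℤ) : ℂ :=
  omegaN N ^ n * Complex.ofReal ((Real.sin (Real.pi * n / N)) ^ (2 * r) / Real.sqrt (U4r N r n))

noncomputable def psi0 (N r : ℕ) (k : ℤ) : ℂ :=
  (N : ℂ)⁻¹ * ∑ n ∈ Finset.range N, omegaN N ^ (k * (n : ℤ)) * betaF N r n

noncomputable def psi1 (N r : ℕ) (k : ℤ) : ℂ :=
  (N : ℂ)⁻¹ * ∑ n ∈ Finset.range N, omegaN N ^ (k * (n : ℤ)) * alphaF N r n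

noncomputable def ip (N : ℕ) (x y : ℤ → ℂ) : ℂ :=
  ∑ k ∈ Finset.range N, x k * (starRingEnd ℂ) (y k)

/-!
By Parseval, the inner product of the two shifts is `N⁻¹ ∑ₙ β[n]² ω^(2(p-l)n)`. The factor
`ω^(2n)` has period `N/2` in `n`, and `β` is power complementary: `β[n]² + β[n + N/2]² = 2`,
because `n ↦ n + N/2` shifts the argument of `cos` and `sin` by `π/2`, which swaps `cos^(4r)`
and `sin^(4r)` and leaves `U^(4r)` unchanged. Folding the sum therefore leaves
`(2/N) ∑_{n < N/2} ω_{N/2}^((p-l)n)`, which is `δ[l - p]` by orthogonality of the `(N/2)`-th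
roots of unity.
-/

open ComplexConjugate

theorem IsPrimitiveRoot.sum_zpow_mul {K : Type*} [Field K] {ζ : K} {n : ℕ}
    (h : IsPrimitiveRoot ζ n) (a : ℤ) :
    ∑ k ∈ range n, ζ ^ ((k : ℤ) * a) = if (n : ℤ) ∣ a then (n : K) else 0 := by
  simp_rw [mul_comm _ a, zpow_mul, zpow_natCast]
  split_ifs with ha
  · simp [(h.zpow_eq_one_iff_dvd a).2 ha]
  · rw [geom_sum_eq (mt (h.zpow_eq_one_iff_dvd a).1 ha), ← zpow_natCast, ← zpow_mul, mul_comm,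
      zpow_mul, zpow_natCast, h.pow_eq_one, one_zpow, sub_self, zero_div]

theorem natCast_dvd_sub_iff_of_lt {n a b : ℕ} (ha : a < n) (hb : b < n) :
    (n : ℤ) ∣ (b : ℤ) - a ↔ a = b :=
  ⟨fun h => (Nat.modEq_iff_dvd.2 h).eq_of_lt_of_lt ha hb, by rintro rfl; simp⟩

theorem omegaN_ne_zero (N : ℕ) : omegaN N ≠ 0 := Complex.exp_ne_zero _

theorem omegaN_isPrimitiveRoot {N : ℕ} (hN : N ≠ 0) : IsPrimitiveRoot (omegaN N) N :=
  Complex.isPrimitiveRoot_exp N hN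

theorem omegaN_two_mul_sq (M : ℕ) : omegaN (2 * M) ^ 2 = omegaN M := by
  rw [omegaN, omegaN, ← Complex.exp_nat_mul]
  rcases eq_or_ne M 0 with rfl | hM
  · simp
  · congr 1
    push_cast
    field_simp

theorem conj_omegaN_zpow {N : ℕ} (hN : N ≠ 0) (z : ℤ) :
    conj (omegaN N ^ z) = omegaN N ^ (-z) := by
  rw [map_zpow₀, ← Complex.inv_eq_conj ((omegaN_isPrimitiveRoot hN).norm'_eq_one hN), inv_zpow,
    zpow_neg]

noncomputable def invDFT (N : ℕ) (a : ℤ → ℂ) (k : ℤ) : ℂ :=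
  (N : ℂ)⁻¹ * ∑ n ∈ range N, omegaN N ^ (k * (n : ℤ)) * a n

theorem invDFT_sub (N : ℕ) (a : ℤ → ℂ) (k s : ℤ) :
    invDFT N a (k - s) = invDFT N (fun n => omegaN N ^ (-(s * n)) * a n) k := by
  simp only [invDFT, sub_eq_add_neg, add_mul, zpow_add₀ (omegaN_ne_zero N), neg_mul, mul_assoc]

theorem ip_invDFT {N : ℕ} (hN : N ≠ 0) (a b : ℤ → ℂ) :
    ip N (invDFT N a) (invDFT N b) = (N : ℂ)⁻¹ * ∑ n ∈ range N, a n * conj (b n) := by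
  have hker : ∀ n ∈ range N, ∀ m ∈ range N,
      ∑ k ∈ range N, omegaN N ^ ((k : ℤ) * n) * omegaN N ^ (-((k : ℤ) * m)) =
        if n = m then (N : ℂ) else 0 := by
    intro n hn m hm
    simp_rw [← zpow_add₀ (omegaN_ne_zero N), ← mul_neg, ← mul_add, ← sub_eq_add_neg,
      (omegaN_isPrimitiveRoot hN).sum_zpow_mul,
      natCast_dvd_sub_iff_of_lt (mem_range.1 hm) (mem_range.1 hn), eq_comm]
  calc ip N (invDFT N a) (invDFT N b)
      = (N : ℂ)⁻¹ * (N : ℂ)⁻¹ * ∑ n ∈ range N, ∑ m ∈ range N,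
          a n * conj (b m) *
            ∑ k ∈ range N, omegaN N ^ ((k : ℤ) * n) * omegaN N ^ (-((k : ℤ) * m)) := by
        simp only [ip, invDFT, map_mul, map_sum, map_inv₀, Complex.conj_natCast,
          conj_omegaN_zpow hN, mul_sum, sum_mul]
        rw [sum_comm]
        refine (sum_congr rfl fun m _ => sum_comm).trans ?_
        rw [sum_comm]
        refine sum_congr rfl fun n _ => sum_congr rfl fun m _ => sum_congr rfl fun k _ => ?_
        ring
    _ = (N : ℂ)⁻¹ * (N : ℂ)⁻¹ * ∑ n ∈ range N, a n * conj (b n) * N := by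
        congr 1
        refine sum_congr rfl fun n hn => ?_
        rw [sum_congr rfl fun m hm => by rw [hker n hn m hm]]
        simp only [mul_ite, mul_zero, sum_ite_eq, if_pos hn]
    _ = (N : ℂ)⁻¹ * ∑ n ∈ range N, a n * conj (b n) := by
        rw [← sum_mul]
        field_simp [Nat.cast_ne_zero.2 hN]

theorem ip_invDFT_sub {N : ℕ} (hN : N ≠ 0) (a b : ℤ → ℂ) (s t : ℤ) :
    ip N (fun k => invDFT N a (k - s)) (fun k => invDFT N b (k - t)) =
      (N : ℂ)⁻¹ * ∑ n ∈ range N, a n * conj (b n) * omegaN N ^ ((t - s) * n) := by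
  simp_rw [invDFT_sub]
  rw [ip_invDFT hN]
  congr 1
  refine sum_congr rfl fun n _ => ?_
  rw [map_mul, conj_omegaN_zpow hN, neg_neg, sub_mul, sub_eq_neg_add,
    zpow_add₀ (omegaN_ne_zero N)]
  ring

theorem cos_pow_add_sin_pow_pos {k : ℕ} (hk : Even k) (x : ℝ) :
    0 < Real.cos x ^ k + Real.sin x ^ k := by
  rcases eq_or_ne (Real.cos x) 0 with hc | hc
  · have hs : Real.sin x ^ 2 = 1 := by nlinarith [Real.sin_sq_add_cos_sq x]
    obtain ⟨m, rfl⟩ := hk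
    rw [← two_mul, pow_mul (Real.sin x), hs, one_pow]
    exact add_pos_of_nonneg_of_pos ((even_two_mul m).pow_nonneg _) one_pos
  · exact add_pos_of_pos_of_nonneg (hk.pow_pos hc) (hk.pow_nonneg _)

theorem U4r_pos (N r : ℕ) (n : ℤ) : 0 < U4r N r n :=
  half_pos (cos_pow_add_sin_pow_pos ⟨2 * r, by ring⟩ _)

theorem betaF_sq (N r : ℕ) (n : ℤ) :
    betaF N r n ^ 2 = ((Real.cos (Real.pi * n / N) ^ (4 * r) / U4r N r n : ℝ) : ℂ) := by
  rw [betaF, ← Complex.ofReal_pow, div_pow, Real.sq_sqrt (U4r_pos N r n).le, ← pow_mul]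
  ring_nf

theorem betaF_sq_add_betaF_add_half_sq {M : ℕ} (hM : M ≠ 0) (r : ℕ) (n : ℤ) :
    betaF (2 * M) r n ^ 2 + betaF (2 * M) r (n + M) ^ 2 = 2 := by
  have hshift : Real.pi * ((n + M : ℤ) : ℝ) / (2 * M : ℕ) =
      Real.pi * n / (2 * M : ℕ) + Real.pi / 2 := by
    push_cast
    field_simp
  have h4r : Even (4 * r) := ⟨2 * r, by ring⟩
  have hU : U4r (2 * M) r (n + M) = U4r (2 * M) r n := by
    rw [U4r, U4r, hshift, Real.cos_add_pi_div_two, Real.sin_add_pi_div_two, h4r.neg_pow, add_comm]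
  rw [betaF_sq, betaF_sq, hU, hshift, Real.cos_add_pi_div_two, h4r.neg_pow, ← Complex.ofReal_add,
    ← add_div]
  have hsum : Real.cos (Real.pi * n / (2 * M : ℕ)) ^ (4 * r) +
      Real.sin (Real.pi * n / (2 * M : ℕ)) ^ (4 * r) = 2 * U4r (2 * M) r n := by
    rw [U4r]
    ring
  rw [hsum, mul_div_cancel_right₀ _ (U4r_pos (2 * M) r n).ne']
  norm_num

theorem sum_betaF_sq_mul_omegaN_zpow {M : ℕ} (hM : M ≠ 0) (r : ℕ) (m : ℤ) :
    ∑ n ∈ range (2 * M), betaF (2 * M) r n ^ 2 * omegaN (2 * M) ^ (2 * m * n) =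
      2 * ∑ n ∈ range M, omegaN M ^ ((n : ℤ) * m) := by
  have hsq (n : ℤ) : omegaN (2 * M) ^ (2 * m * n) = omegaN M ^ (n * m) := by
    rw [← omegaN_two_mul_sq M, ← zpow_natCast, ← zpow_mul]
    ring_nf
  have hperiod (n : ℕ) : omegaN M ^ (((M + n : ℕ) : ℤ) * m) = omegaN M ^ ((n : ℤ) * m) := by
    have hM1 : omegaN M ^ ((M : ℤ) * m) = 1 :=
      ((omegaN_isPrimitiveRoot hM).zpow_eq_one_iff_dvd _).2 ⟨m, rfl⟩
    rw [Nat.cast_add, add_mul, zpow_add₀ (omegaN_ne_zero M), hM1, one_mul]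
  simp_rw [hsq]
  rw [show range (2 * M) = range (M + M) by rw [two_mul], sum_range_add, ← sum_add_distrib,
    mul_sum]
  refine sum_congr rfl fun n _ => ?_
  rw [hperiod, ← add_mul, Nat.cast_add, add_comm (M : ℤ), betaF_sq_add_betaF_add_half_sq hM]

theorem stmt_0_general (j r : ℕ) (N : ℕ) (hN : N = 2 ^ j)
    (l p : ℕ) (hl : l < N / 2) (hp : p < N / 2) :
    ip N (fun k => psi0 N r (k - 2 * (l : ℤ))) (fun k => psi0 N r (k - 2 * (p : ℤ))) =
      if l = p then 1 else 0 := by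
  obtain ⟨M, rfl⟩ : ∃ M, N = 2 * M := by
    obtain ⟨i, rfl⟩ : ∃ i, j = i + 1 :=
      Nat.exists_eq_succ_of_ne_zero (by rintro rfl; simp_all)
    exact ⟨2 ^ i, by rw [hN, pow_succ']⟩
  rw [Nat.mul_div_cancel_left M two_pos] at hl hp
  have hM : M ≠ 0 := by omega
  calc ip (2 * M) (fun k => psi0 (2 * M) r (k - 2 * (l : ℤ)))
        (fun k => psi0 (2 * M) r (k - 2 * (p : ℤ)))
      = ((2 * M : ℕ) : ℂ)⁻¹ * ∑ n ∈ range (2 * M),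
          betaF (2 * M) r n ^ 2 * omegaN (2 * M) ^ (2 * ((p : ℤ) - l) * n) := by
        rw [show psi0 (2 * M) r = invDFT (2 * M) (betaF (2 * M) r) from rfl,
          ip_invDFT_sub (by omega)]
        simp only [betaF, Complex.conj_ofReal, ← sq, mul_sub]
    _ = if l = p then 1 else 0 := by
        rw [sum_betaF_sq_mul_omegaN_zpow hM, (omegaN_isPrimitiveRoot hM).sum_zpow_mul]
        simp only [natCast_dvd_sub_iff_of_lt hl hp]
        split_ifs
        · push_cast
          field_simp
        · simp

/-- The N/2 two-sample shifts of the first-level discrete-spline wavelet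
packet ψ₀ of order 2r form an orthonormal system in Π[N]. -/
theorem stmt_0 (j r : ℕ) (hj : 3 ≤ j) (hr : 1 ≤ r) (N : ℕ) (hN : N = 2 ^ j)
    (l p : ℕ) (hl : l < N / 2) (hp : p < N / 2) :
    ip N (fun k => psi0 N r (k - 2 * (l : ℤ))) (fun k => psi0 N r (k - 2 * (p : ℤ))) =
      if l = p then 1 else 0 :=
  stmt_0_general j r N hN l p hl hp
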